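/- Let (G,σ) and (H,σ') be finite simple graphs with ordered vertex sets, let p = FF(G,σ) and q = FF(H,σ') with 2 ≤ p ≤ q. Then there exists a proper coloring C of G□H with q colors such that (G□H, lex, C) has a q-greedy defining set of cardinality at most α(G)·α(H)·[pq − q + p − 1 − (p·log₂(4p−4))/4], where α denotes the independence number. -/

import Mathlib

open SimpleGraph

/-- First-Fit (greedy) coloring of `G` with respect to the vertex ordering given by the
injective position function `ord` (vertex `u` comes before `v` iff `ord u < ord v`).
Each vertex receives the smallest positive integer not used on earlier neighbors. -/
noncomputable def firstFit {V : Type*} (G : SimpleGraph V) (ord : V → ℕ) : V → ℕ :=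
  (InvImage.wf ord Nat.lt_wfRel.wf).fix
    (fun v ih => sInf {c : ℕ | 1 ≤ c ∧ ∀ u, ∀ h : ord u < ord v, G.Adj u v → ih u h ≠ c})

/-- `FFColors G ord` is the number of colors used by the First-Fit coloring. -/
noncomputable def FFColors {V : Type*} [Fintype V] (G : SimpleGraph V) (ord : V → ℕ) : ℕ :=
  (Finset.univ.image (firstFit G ord)).card

open Classical in
/-- First-Fit coloring of `(G, ord)` subject to the pre-coloring `C₀` on the set `S`:
vertices of `S` keep their pre-assigned colors and are skipped by the scan; every other
vertex receives the smallest positive integer not already assigned (or pre-assigned)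
to a neighbor. -/
noncomputable def firstFitWith {V : Type*} (G : SimpleGraph V) (ord : V → ℕ)
    (S : Set V) (C₀ : V → ℕ) : V → ℕ :=
  (InvImage.wf ord Nat.lt_wfRel.wf).fix
    (fun v ih =>
      if v ∈ S then C₀ v
      else sInf {c : ℕ | 1 ≤ c ∧ (∀ u, G.Adj u v → u ∈ S → C₀ u ≠ c) ∧
        ∀ u, ∀ h : ord u < ord v, G.Adj u v → u ∉ S → ih u h ≠ c})

/-- Position function of the lexicographic order on `V × W` induced by the position
functions `σ` on `V` and `σ'` on `W` (for injective `σ, σ'`: `(u,v)` comes before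
`(u',v')` iff `σ u < σ u'`, or `u = u'` and `σ' v < σ' v'`). -/
noncomputable def lexPos {V W : Type*} [Fintype W] (σ : V → ℕ) (σ' : W → ℕ) : V × W → ℕ :=
  fun p => σ p.1 * (Finset.univ.sup σ' + 1) + σ' p.2

/-- A proper coloring with colors in the positive integers. -/
def IsProperColoring {V : Type*} (G : SimpleGraph V) (C : V → ℕ) : Prop :=
  (∀ v, 1 ≤ C v) ∧ ∀ ⦃u v⦄, G.Adj u v → C u ≠ C v

/-- `D` is a `(C, ord)`-descent: `D = {v} ∪ N` where `C v = y`, `x < y` is a (positive)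
color, `N` is the set of neighbors of `v` of color `x`, and every `u ∈ N` comes after
`v` in the order. -/
def IsDescent {V : Type*} (G : SimpleGraph V) (ord : V → ℕ) (C : V → ℕ) (D : Set V) : Prop :=
  ∃ v x, 1 ≤ x ∧ x < C v ∧
    (∀ u, G.Adj u v → C u = x → ord v < ord u) ∧
    D = insert v {u | G.Adj u v ∧ C u = x}

/-- The Grundy number: the maximum of `FFColors G ord` over all vertex orderings. -/
noncomputable def grundy {V : Type*} [Fintype V] (G : SimpleGraph V) : ℕ :=
  sSup {n | ∃ ord : V → ℕ, Function.Injective ord ∧ FFColors G ord = n}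

/-- The independence number of `G`. -/
noncomputable def indepNum {V : Type*} [Fintype V] (G : SimpleGraph V) : ℕ :=
  sSup {n | ∃ s : Finset V, (∀ u ∈ s, ∀ v ∈ s, ¬ G.Adj u v) ∧ s.card = n}

/-- An `m × n` Latin rectangle: entries in `{1, …, n}`, no repeats in rows or columns. -/
def IsLatinRectangle {m n : ℕ} (R : Fin m → Fin n → ℕ) : Prop :=
  (∀ i j, R i j ∈ Finset.Icc 1 n) ∧ (∀ i, Function.Injective (R i)) ∧
    (∀ j, Function.Injective (fun i => R i j))

/-- `S` is a greedy defining set of the rectangle `R` (cells scanned in lexicographic,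
i.e. row-by-row, order): the greedy completion, which skips the cells of `S` (fixed to
their values in `R`) and places in each other cell the smallest positive integer not yet
appearing in its row or column, reproduces `R`.  This is First-Fit on the rook's graph
`K_m □ K_n` subject to the pre-coloring of `S` by `R`. -/
noncomputable def IsRectGDS {m n : ℕ} (R : Fin m → Fin n → ℕ) (S : Set (Fin m × Fin n)) : Prop :=
  firstFitWith ((⊤ : SimpleGraph (Fin m)).boxProd (⊤ : SimpleGraph (Fin n)))
    (lexPos Fin.val Fin.val) S (fun p => R p.1 p.2) = fun p => R p.1 p.2

/-- The Latin square `L_k` of order `2^k`: the entry in row `i`, column `j` is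
`2^k - (i XOR j)`; equivalently the `k`-fold tensor product of `[[2,1],[1,2]]`. -/
def Lsquare (k : ℕ) : Fin (2 ^ k) → Fin (2 ^ k) → ℕ :=
  fun i j => 2 ^ k - (i.val ^^^ j.val)

/-!
Colour `G` and `H` by First-Fit, getting colourings `a` with at most `p` colours and `b` with
`q` colours, and give `(u, w)` the entry in row `a u`, column `b w` of the cyclic Latin square of
order `q`. In row `1`, and in the part of any row that wraps around modulo `q`, the entries go up
by one from column to column; since `b` is a First-Fit colouring, every smaller colour of such a
cell already sits on an earlier `H`-neighbour in the same `G`-fibre, so First-Fit reproduces the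
cell. It thus suffices to pre-colour the cells with `2 ≤ a u` and `a u + b w ≤ q + 1`. Each pair
of colour classes of `a` and `b` contains at most `α(G) α(H)` of them, and there are
`pq - q + p - p(p+1)/2` admissible pairs, which is within the bound as `log₂(4p - 4) ≤ p + 1`.
-/

def IsFirstFitAt {V : Type*} (G : SimpleGraph V) (ord : V → ℕ) (C : V → ℕ) (v : V) : Prop :=
  ∀ c, 1 ≤ c → c < C v → ∃ u, G.Adj u v ∧ ord u < ord v ∧ C u = c

section FirstFit

variable {V : Type*} (G : SimpleGraph V) (ord : V → ℕ)

lemma firstFit_eq (v : V) :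
    firstFit G ord v = sInf {c : ℕ | 1 ≤ c ∧
      ∀ u, ord u < ord v → G.Adj u v → firstFit G ord u ≠ c} :=
  WellFounded.fix_eq _ _ _

open Classical in
lemma firstFitWith_eq (S : Set V) (C₀ : V → ℕ) (v : V) :
    firstFitWith G ord S C₀ v =
      if v ∈ S then C₀ v
      else sInf {c : ℕ | 1 ≤ c ∧ (∀ u, G.Adj u v → u ∈ S → C₀ u ≠ c) ∧
        ∀ u, ord u < ord v → G.Adj u v → u ∉ S → firstFitWith G ord S C₀ u ≠ c} :=
  WellFounded.fix_eq _ _ _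

lemma firstFitWith_eq_self {S : Set V} {C : V → ℕ} (hC : IsProperColoring G C)
    (hS : ∀ v ∉ S, IsFirstFitAt G ord C v) : firstFitWith G ord S C = C := by
  funext v
  induction hn : ord v using Nat.strong_induction_on generalizing v with
  | _ n ih =>
  have hprev : ∀ u, ord u < ord v → firstFitWith G ord S C u = C u :=
    fun u hu => ih _ (hn ▸ hu) u rfl
  rw [firstFitWith_eq]
  split_ifs with hv
  · rfl
  have hCv : C v ∈ {c : ℕ | 1 ≤ c ∧ (∀ u, G.Adj u v → u ∈ S → C u ≠ c) ∧
      ∀ u, ord u < ord v → G.Adj u v → u ∉ S → firstFitWith G ord S C u ≠ c} :=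
    ⟨hC.1 v, fun u hadj _ => hC.2 hadj, fun u hu hadj _ => hprev u hu ▸ hC.2 hadj⟩
  refine le_antisymm (Nat.sInf_le hCv) (not_lt.1 fun hlt => ?_)
  obtain ⟨h1, hpre, hscan⟩ := Nat.sInf_mem ⟨_, hCv⟩
  obtain ⟨u, hadj, hu, hCu⟩ := hS v hv _ h1 hlt
  by_cases huS : u ∈ S
  · exact hpre u hadj huS hCu
  · exact hscan u hu hadj huS (by rw [hprev u hu, hCu])

lemma isFirstFitAt_firstFit (v : V) : IsFirstFitAt G ord (firstFit G ord) v := by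
  intro c hc hcv
  by_contra! h
  have hmem : c ∈ {c : ℕ | 1 ≤ c ∧ ∀ u, ord u < ord v → G.Adj u v → firstFit G ord u ≠ c} :=
    ⟨hc, fun u hu hadj => h u hadj hu⟩
  have := Nat.sInf_le hmem
  rw [← firstFit_eq] at this
  omega

variable [Fintype V]

lemma firstFit_mem (v : V) :
    firstFit G ord v ∈ {c : ℕ | 1 ≤ c ∧
      ∀ u, ord u < ord v → G.Adj u v → firstFit G ord u ≠ c} := by
  rw [firstFit_eq]
  refine Nat.sInf_mem ⟨Finset.univ.sup (firstFit G ord) + 1, by omega, fun u _ _ => ?_⟩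
  have := Finset.le_sup (f := firstFit G ord) (Finset.mem_univ u)
  omega

lemma isProperColoring_firstFit (hord : Function.Injective ord) :
    IsProperColoring G (firstFit G ord) := by
  refine ⟨fun v => (firstFit_mem G ord v).1, fun u v h => ?_⟩
  rcases lt_or_gt_of_ne (hord.ne h.ne) with hlt | hlt
  · exact fun hEq => (firstFit_mem G ord v).2 u hlt h hEq
  · exact fun hEq => (firstFit_mem G ord u).2 v hlt h.symm hEq.symm

lemma firstFit_le_FFColors (v : V) : firstFit G ord v ≤ FFColors G ord := by
  have hsub : Finset.Icc 1 (firstFit G ord v) ⊆ Finset.univ.image (firstFit G ord) := by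
    intro c hc
    rw [Finset.mem_Icc] at hc
    rw [Finset.mem_image]
    rcases hc.2.eq_or_lt with rfl | hlt
    · exact ⟨v, Finset.mem_univ _, rfl⟩
    · obtain ⟨u, -, -, hu⟩ := isFirstFitAt_firstFit G ord v c hc.1 hlt
      exact ⟨u, Finset.mem_univ _, hu⟩
  calc firstFit G ord v = (Finset.Icc 1 (firstFit G ord v)).card := by simp
    _ ≤ FFColors G ord := Finset.card_le_card hsub

lemma card_le_indepNum {s : Finset V} (hs : ∀ u ∈ s, ∀ v ∈ s, ¬ G.Adj u v) :
    s.card ≤ _root_.indepNum G :=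
  le_csSup ⟨Fintype.card V, by rintro _ ⟨t, -, rfl⟩; exact t.card_le_univ⟩ ⟨s, hs, rfl⟩

lemma card_colorClass_le_indepNum {C : V → ℕ} (hC : ∀ ⦃u v⦄, G.Adj u v → C u ≠ C v) (c : ℕ) :
    (Finset.univ.filter (C · = c)).card ≤ _root_.indepNum G :=
  card_le_indepNum G fun u hu v hv hadj => hC hadj (by simp_all)

end FirstFit

lemma lexPos_lt_lexPos_right {V W : Type*} [Fintype W] (σ : V → ℕ) (σ' : W → ℕ) (u : V)
    {w w' : W} (h : σ' w' < σ' w) : lexPos σ σ' (u, w') < lexPos σ σ' (u, w) :=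
  Nat.add_lt_add_left h _

section CyclicLatin

def cyclicLatin (q i j : ℕ) : ℕ := (i - 1 + (j - 1)) % q + 1

lemma one_le_cyclicLatin (q i j : ℕ) : 1 ≤ cyclicLatin q i j := Nat.le_add_left 1 _

lemma cyclicLatin_le {q : ℕ} (hq : 0 < q) (i j : ℕ) : cyclicLatin q i j ≤ q := Nat.mod_lt _ hq

lemma cyclicLatin_comm (q i j : ℕ) : cyclicLatin q i j = cyclicLatin q j i := by
  rw [cyclicLatin, cyclicLatin, Nat.add_comm (i - 1)]

lemma cyclicLatin_injOn (q i : ℕ) : Set.InjOn (cyclicLatin q i) (Set.Icc 1 q) := by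
  rintro j ⟨hj1, hjq⟩ j' ⟨hj1', hjq'⟩ h
  have hmod : j - 1 ≡ j' - 1 [MOD q] := Nat.ModEq.add_left_cancel' (i - 1) (Nat.add_right_cancel h)
  rw [Nat.ModEq, Nat.mod_eq_of_lt (by omega), Nat.mod_eq_of_lt (by omega)] at hmod
  omega

lemma cyclicLatin_of_add_le {q i j : ℕ} (hi : 1 ≤ i) (hj : 1 ≤ j) (h : i + j ≤ q + 1) :
    cyclicLatin q i j = i + j - 1 := by
  rw [cyclicLatin, Nat.mod_eq_of_lt (by omega)]
  omega

lemma cyclicLatin_of_lt_add {q i j : ℕ} (hi : i ≤ q) (hj : j ≤ q) (h : q + 1 < i + j) :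
    cyclicLatin q i j = i + j - 1 - q := by
  rw [cyclicLatin, Nat.mod_eq_sub_mod (by omega), Nat.mod_eq_of_lt (by omega)]
  omega

lemma exists_cyclicLatin_eq_of_lt {q i j c : ℕ} (hi : i ∈ Set.Icc 1 q) (hj : j ∈ Set.Icc 1 q)
    (hij : i = 1 ∨ q + 1 < i + j) (hc : 1 ≤ c) (hcij : c < cyclicLatin q i j) :
    ∃ j', 1 ≤ j' ∧ j' < j ∧ cyclicLatin q i j' = c := by
  obtain ⟨hi1, hiq⟩ := hi
  obtain ⟨hj1, hjq⟩ := hj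
  rcases hij with rfl | hwrap
  · rw [cyclicLatin_of_add_le le_rfl hj1 (by omega)] at hcij
    exact ⟨c, hc, by omega, by rw [cyclicLatin_of_add_le le_rfl hc (by omega)]; omega⟩
  · rw [cyclicLatin_of_lt_add hiq hjq hwrap] at hcij
    refine ⟨q + 1 - i + c, by omega, by omega, ?_⟩
    rw [cyclicLatin_of_lt_add hiq (by omega) (by omega)]
    omega

end CyclicLatin

-- the possible colour pairs `(a u, b w)` of cells of `latinDefiningSet`
def staircase (p q : ℕ) : Finset (ℕ × ℕ) :=
  (Finset.Icc 2 p ×ˢ Finset.Icc 1 q).filter fun c => c.1 + c.2 ≤ q + 1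

section LatinProduct

variable {V W : Type*} (q : ℕ) (a : V → ℕ) (b : W → ℕ)

def latinProduct : V × W → ℕ := fun x => cyclicLatin q (a x.1) (b x.2)

def latinDefiningSet [Fintype V] [Fintype W] : Finset (V × W) :=
  Finset.univ.filter fun x => 2 ≤ a x.1 ∧ a x.1 + b x.2 ≤ q + 1

variable {q a b} {G : SimpleGraph V} {H : SimpleGraph W}

lemma isProperColoring_latinProduct (ha : ∀ u, a u ∈ Set.Icc 1 q) (hb : ∀ w, b w ∈ Set.Icc 1 q)
    (haG : ∀ ⦃u v⦄, G.Adj u v → a u ≠ a v) (hbH : ∀ ⦃u v⦄, H.Adj u v → b u ≠ b v) :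
    IsProperColoring (G □ H) (latinProduct q a b) := by
  refine ⟨fun x => one_le_cyclicLatin _ _ _, ?_⟩
  rintro ⟨u, w⟩ ⟨u', w'⟩ (⟨hG, rfl : w = w'⟩ | ⟨hH, rfl : u = u'⟩)
  · simp only [latinProduct, cyclicLatin_comm q _ (b w)]
    exact (cyclicLatin_injOn q (b w)).ne (ha u) (ha u') (haG hG)
  · exact (cyclicLatin_injOn q (a u)).ne (hb w) (hb w') (hbH hH)

lemma isFirstFitAt_latinProduct [Fintype V] [Fintype W] (σ : V → ℕ) {σ' : W → ℕ}
    (ha : ∀ u, a u ∈ Set.Icc 1 q) (hb : ∀ w, b w ∈ Set.Icc 1 q)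
    (hbH : ∀ w, IsFirstFitAt H σ' b w) {x : V × W} (hx : x ∉ latinDefiningSet q a b) :
    IsFirstFitAt (G □ H) (lexPos σ σ') (latinProduct q a b) x := by
  obtain ⟨u, w⟩ := x
  intro c hc hcx
  have hrow : a u = 1 ∨ q + 1 < a u + b w := by
    simp only [latinDefiningSet, Finset.mem_filter, Finset.mem_univ, true_and, not_and,
      not_le] at hx
    have := (ha u).1
    omega
  obtain ⟨j, hj1, hjw, hj⟩ := exists_cyclicLatin_eq_of_lt (ha u) (hb w) hrow hc hcx
  obtain ⟨w', hadj, hlt, rfl⟩ := hbH w j hj1 hjw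
  exact ⟨(u, w'), Or.inr ⟨hadj, rfl⟩, lexPos_lt_lexPos_right σ σ' u hlt, hj⟩

lemma card_latinDefiningSet_le [Fintype V] [Fintype W] {p : ℕ} (ha : ∀ u, a u ≤ p)
    (hb : ∀ w, 1 ≤ b w) (haG : ∀ ⦃u v⦄, G.Adj u v → a u ≠ a v)
    (hbH : ∀ ⦃u v⦄, H.Adj u v → b u ≠ b v) :
    (latinDefiningSet q a b).card ≤
      _root_.indepNum G * _root_.indepNum H * (staircase p q).card := by
  refine Finset.card_le_mul_card_image_of_maps_to (f := fun x => (a x.1, b x.2)) ?_ _ ?_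
  · intro x hx
    simp only [latinDefiningSet, staircase, Finset.mem_filter, Finset.mem_univ, true_and,
      Finset.mem_product, Finset.mem_Icc] at hx ⊢
    have := ha x.1
    have := hb x.2
    omega
  · rintro ⟨i, j⟩ -
    calc _ ≤ ((Finset.univ.filter (a · = i)) ×ˢ (Finset.univ.filter (b · = j))).card := by
          refine Finset.card_le_card fun x hx => ?_
          simp only [Finset.mem_filter, Prod.mk.injEq] at hx
          simp [hx.2]
      _ ≤ _ := by
          rw [Finset.card_product]
          exact Nat.mul_le_mul (card_colorClass_le_indepNum G haG i)
            (card_colorClass_le_indepNum H hbH j)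

end LatinProduct

lemma card_staircase_eq_sum (p q : ℕ) :
    (staircase p q).card = ∑ i ∈ Finset.Icc 2 p, (q + 1 - i) := by
  rw [staircase, Finset.card_filter, Finset.sum_product]
  refine Finset.sum_congr rfl fun i hi => ?_
  have hrow : (Finset.Icc 1 q).filter (fun j => i + j ≤ q + 1) = Finset.Icc 1 (q + 1 - i) := by
    ext j
    simp only [Finset.mem_filter, Finset.mem_Icc] at hi ⊢
    omega
  rw [← Finset.card_filter, hrow, Nat.card_Icc]
  omega

lemma card_staircase {p q : ℕ} (hp : 1 ≤ p) (hpq : p ≤ q) :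
    ((staircase p q).card : ℝ) = p * q - q + p - p * (p + 1) / 2 := by
  rw [card_staircase_eq_sum, Nat.cast_sum]
  induction p, hp using Nat.le_induction with
  | base => norm_num
  | succ n hn ih =>
    rw [Finset.sum_Icc_succ_top (by omega), ih (by omega), Nat.cast_sub (by omega)]
    push_cast
    ring

lemma logb_two_four_mul_sub_four_le {p : ℕ} (hp : 2 ≤ p) :
    Real.logb 2 (4 * p - 4) ≤ p + 1 := by
  have hpow : 4 * p ≤ 2 ^ (p + 1) := by
    have := (p - 1).lt_two_pow_self
    rw [show p + 1 = p - 1 + 2 by omega, pow_add]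
    omega
  have hp' : (2 : ℝ) ≤ p := by exact_mod_cast hp
  calc Real.logb 2 (4 * p - 4) ≤ Real.logb 2 (2 ^ (p + 1)) := by
        refine Real.logb_le_logb_of_le one_lt_two (by linarith) ?_
        have : ((4 * p : ℕ) : ℝ) ≤ ((2 ^ (p + 1) : ℕ) : ℝ) := by exact_mod_cast hpow
        push_cast at this
        linarith
    _ = p + 1 := by
        rw [Real.logb_pow, Real.logb_self_eq_one one_lt_two]
        push_cast
        ring

lemma card_staircase_le {p q : ℕ} (hp : 2 ≤ p) (hpq : p ≤ q) :
    ((staircase p q).card : ℝ) ≤ p * q - q + p - 1 - p * Real.logb 2 (4 * p - 4) / 4 := by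
  rw [card_staircase (by omega) hpq]
  have hp' : (2 : ℝ) ≤ p := by exact_mod_cast hp
  have hlog :=
    mul_le_mul_of_nonneg_left (logb_two_four_mul_sub_four_le hp) (by linarith : (0 : ℝ) ≤ p)
  nlinarith

/-- With `p = FF(G,σ)`, `q = FF(H,σ')`, `2 ≤ p ≤ q`, there is a proper
coloring `C` of `G □ H` with `q` colors admitting a `q`-greedy defining set of
cardinality at most `α(G)·α(H)·[pq - q + p - 1 - p·log₂(4p-4)/4]`. -/
theorem boxProd_gds_upper_bound {V W : Type*} [Fintype V] [Fintype W]
    (G : SimpleGraph V) (H : SimpleGraph W)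
    (σ : V → ℕ) (σ' : W → ℕ) (hσ : Function.Injective σ) (hσ' : Function.Injective σ')
    (p q : ℕ) (hp : FFColors G σ = p) (hq : FFColors H σ' = q)
    (h2p : 2 ≤ p) (hpq : p ≤ q) :
    ∃ C : V × W → ℕ, IsProperColoring (G.boxProd H) C ∧ (∀ v, C v ≤ q) ∧
      ∃ S : Finset (V × W),
        firstFitWith (G.boxProd H) (lexPos σ σ') ↑S C = C ∧
        (S.card : ℝ) ≤ (_root_.indepNum G : ℝ) * (_root_.indepNum H) *
          ((p : ℝ) * q - q + p - 1 - (p : ℝ) * Real.logb 2 (4 * (p : ℝ) - 4) / 4) := by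
  set a := firstFit G σ
  set b := firstFit H σ'
  have ha := isProperColoring_firstFit G σ hσ
  have hb := isProperColoring_firstFit H σ' hσ'
  have hap : ∀ u, a u ≤ p := fun u => hp ▸ firstFit_le_FFColors G σ u
  have haq : ∀ u, a u ∈ Set.Icc 1 q := fun u => ⟨ha.1 u, (hap u).trans hpq⟩
  have hbq : ∀ w, b w ∈ Set.Icc 1 q := fun w => ⟨hb.1 w, hq ▸ firstFit_le_FFColors H σ' w⟩
  have hC := isProperColoring_latinProduct haq hbq ha.2 hb.2
  refine ⟨latinProduct q a b, hC, fun x => cyclicLatin_le (by omega) _ _,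
    latinDefiningSet q a b, firstFitWith_eq_self _ _ hC fun x hx =>
      isFirstFitAt_latinProduct σ haq hbq (isFirstFitAt_firstFit H σ') hx, ?_⟩
  calc ((latinDefiningSet q a b).card : ℝ)
      ≤ _root_.indepNum G * _root_.indepNum H * ((staircase p q).card : ℝ) := by
        exact_mod_cast card_latinDefiningSet_le hap hb.1 ha.2 hb.2
    _ ≤ _ := mul_le_mul_of_nonneg_left (card_staircase_le h2p hpq) (by positivity)
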